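/- Under the Protocol 1 model: if N ≥ 2 and an attack (U_E, {U_F^{(r)}}) satisfies the no-error conditions (T'), (Z') and (X'), with F_{s,i} the associated unit vectors, then for any two injective maps s, s' : Fin r ↪ Fin N of the same length r and any bitstrings i, i' such that the Hamming weights of the kept substrings agree, wt(i∘s̄) = wt(i'∘s̄'), one has F_{s,i} = F_{s',i'}. In other words, Eve's final state depends only on r and on the Hamming weight of the string of bits kept (measured) by Bob. -/

import Mathlib

/-!
Protocol 1 model (randomization-based semi-quantum key distribution):
see Boyer, Gelles, Kenigsberg, Mor, "Semi-Quantum Key Distribution".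
-/

namespace SQKD1

/-- Bitstrings of length `N`. -/
abbrev Bits (N : ℕ) := Fin N → Bool

/-- The space attacked by `U_E`: Eve's probe together with the `N` travelling
qubits. -/
abbrev HE (N d : ℕ) := EuclideanSpace ℂ (Fin d × Bits N)

/-- The space attacked by `U_F^{(r)}`: Eve's probe together with the `r`
reflected qubits. -/
abbrev HF (d r : ℕ) := EuclideanSpace ℂ (Fin d × (Fin r → Bool))

/-- Hamming weight of a bitstring. -/
def wt {n : ℕ} (y : Fin n → Bool) : ℕ := (Finset.univ.filter fun k => y k = true).card

/-- The elementary tensor `v ⊗ δ_u` of a vector `v` of Eve's probe space with a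
standard basis vector `δ_u`. -/
noncomputable def tprod {d : ℕ} {ι : Type*} [DecidableEq ι]
    (v : EuclideanSpace ℂ (Fin d)) (u : ι) : EuclideanSpace ℂ (Fin d × ι) :=
  WithLp.toLp 2 (fun p : Fin d × ι => if p.2 = u then v p.1 else 0)

/-- Condition (T'): no error on TEST bits; `U_E (ε₀ ⊗ δ_i) = E_i ⊗ δ_i`. -/
def CondT {N d : ℕ} (hd : 0 < d) (UE : HE N d ≃ₗᵢ[ℂ] HE N d)
    (E : Bits N → EuclideanSpace ℂ (Fin d)) : Prop :=
  ∀ i : Bits N,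
    UE (EuclideanSpace.single ((⟨0, hd⟩ : Fin d), i) 1) = tprod (E i) i

/-- Condition (Z'): no error on Z-CTRL bits;
`U_F^{(r)} (E_i ⊗ δ_{i∘s}) = F_{s,i} ⊗ δ_{i∘s}`. -/
def CondZ {N d : ℕ} (UF : (r : ℕ) → r ≤ N → (HF d r ≃ₗᵢ[ℂ] HF d r))
    (E : Bits N → EuclideanSpace ℂ (Fin d))
    (F : (r : ℕ) → r ≤ N → (Fin r ↪ Fin N) → Bits N → EuclideanSpace ℂ (Fin d)) :
    Prop :=
  ∀ (r : ℕ) (hr : r ≤ N) (s : Fin r ↪ Fin N) (i : Bits N),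
    UF r hr (tprod (E i) (fun p => i (s p))) = tprod (F r hr s i) (fun p => i (s p))

/-- Condition (X'): no error on X-CTRL bits.  For `k := s p`, `i k = false` and
`i'` equal to `i` with bit `k` flipped, the state
`Φ = (1/√2)(F_{s,i} ⊗ δ_{i∘s} + F_{s,i'} ⊗ δ_{i'∘s})` has, at every index
`(a,t)`, the same coefficient as at `(a, t')`, where `t'` is `t` with bit `p`
flipped. -/
def CondX {N d : ℕ}
    (F : (r : ℕ) → r ≤ N → (Fin r ↪ Fin N) → Bits N → EuclideanSpace ℂ (Fin d)) :
    Prop :=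
  ∀ (r : ℕ) (hr : r ≤ N) (s : Fin r ↪ Fin N) (p : Fin r) (i : Bits N),
    i (s p) = false →
      ∀ (a : Fin d) (t : Fin r → Bool),
        ((Real.sqrt 2 : ℂ)⁻¹ •
            (tprod (F r hr s i) (fun q => i (s q)) +
              tprod (F r hr s (Function.update i (s p) true))
                (fun q => Function.update i (s p) true (s q)))) (a, t) =
        ((Real.sqrt 2 : ℂ)⁻¹ •
            (tprod (F r hr s i) (fun q => i (s q)) +
              tprod (F r hr s (Function.update i (s p) true))
                (fun q => Function.update i (s p) true (s q))))
          (a, Function.update t p (!(t p)))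

/-- Hamming weight of the substring of `i` kept (measured) by Bob, i.e. of the
restriction of `i` to the complement of the range of `s`. -/
def wtKept {N r : ℕ} (s : Fin r ↪ Fin N) (i : Bits N) : ℕ :=
  (Finset.univ.filter fun k => k ∉ Finset.univ.map s ∧ i k = true).card

/-!
By (X'), flipping a reflected bit never changes `F_{s,i}`, so `F_{s,i}` only sees the kept bits.
By (Z') and injectivity of `U_F`, two strings with the same reflected pattern have equal `F` iff
they have equal `E`. Comparing `r = 1` with the reflected position at `k` and at `l` shows that
`E` is invariant under transposing two bits, hence under all permutations of positions, so `E_i`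
only depends on `wt i`. Clearing the reflected bits of `i` and `i'` then gives two strings with the
same (all-`false`) reflected pattern and the same weight.
-/

open Function

theorem tprod_left_injective {d : ℕ} {ι : Type*} [DecidableEq ι] (u : ι) :
    Injective fun v : EuclideanSpace ℂ (Fin d) => tprod v u := by
  intro v w h
  ext a
  simpa [tprod] using congrArg (fun x => x (a, u)) h

theorem eq_of_eq_off_of_update_invariant {ι α β : Type*} [DecidableEq ι] {g : (ι → α) → β}
    (T : Finset ι) (hg : ∀ x, ∀ k ∈ T, ∀ b, g (update x k b) = g x) {x y : ι → α}
    (hxy : ∀ k ∉ T, x k = y k) : g x = g y := by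
  induction T using Finset.induction_on generalizing x with
  | empty => exact congrArg g (funext fun k => hxy k (Finset.notMem_empty k))
  | insert a T ha ih =>
    calc g x = g (update x a (y a)) := (hg x a (Finset.mem_insert_self a T) (y a)).symm
      _ = g y := by
        refine ih (fun x k hk b => hg x k (Finset.mem_insert_of_mem hk) b) fun k hk => ?_
        by_cases hka : k = a
        · simp [hka]
        · simp [hka, hxy k (by simp [hka, hk])]

theorem exists_perm_comp_eq_of_wt_eq {n : ℕ} {i j : Fin n → Bool} (h : wt i = wt j) :
    ∃ σ : Equiv.Perm (Fin n), j ∘ σ = i := by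
  have htrue : Fintype.card {k // i k = true} = Fintype.card {k // j k = true} := by
    simpa only [wt, Fintype.card_subtype] using h
  have hcard : ∀ b, Fintype.card {k // i k = b} = Fintype.card {k // j k = b}
    | true => htrue
    | false => by
      simp only [Bool.eq_false_iff, Fintype.card_subtype_compl, htrue]
  exact ⟨Equiv.ofFiberEquiv fun b => Fintype.equivOfCardEq (hcard b),
    funext (Equiv.ofFiberEquiv_map _)⟩

def singlePos {N : ℕ} (k : Fin N) : Fin 1 ↪ Fin N :=
  ⟨fun _ => k, injective_of_subsingleton _⟩

theorem mem_map_singlePos {N : ℕ} (k q : Fin N) :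
    q ∈ Finset.univ.map (singlePos k) ↔ q = k := by
  simp [singlePos, eq_comm]

section Attack

variable {N d : ℕ} {UF : (r : ℕ) → r ≤ N → (HF d r ≃ₗᵢ[ℂ] HF d r)}
  {E : Bits N → EuclideanSpace ℂ (Fin d)}
  {F : (r : ℕ) → r ≤ N → (Fin r ↪ Fin N) → Bits N → EuclideanSpace ℂ (Fin d)}

theorem F_eq_iff_E_eq (hZ : CondZ UF E F) {r : ℕ} (hr : r ≤ N) {s s' : Fin r ↪ Fin N}
    {i j : Bits N} (hp : (fun p => i (s p)) = fun p => j (s' p)) :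
    F r hr s i = F r hr s' j ↔ E i = E j := by
  calc F r hr s i = F r hr s' j
        ↔ tprod (F r hr s i) (fun p => i (s p)) = tprod (F r hr s' j) (fun p => j (s' p)) := by
          rw [hp]; exact (tprod_left_injective _).eq_iff.symm
    _ ↔ UF r hr (tprod (E i) (fun p => i (s p))) = UF r hr (tprod (E j) (fun p => j (s' p))) := by
          rw [hZ, hZ]
    _ ↔ E i = E j := by
          rw [(UF r hr).injective.eq_iff, hp, (tprod_left_injective _).eq_iff]

theorem F_update_true (hX : CondX F) {r : ℕ} (hr : r ≤ N) (s : Fin r ↪ Fin N)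
    {i : Bits N} {p : Fin r} (hi : i (s p) = false) :
    F r hr s (update i (s p) true) = F r hr s i := by
  have hpattern : (fun q => update i (s p) true (s q)) = update (fun q => i (s q)) p true :=
    update_comp_eq_of_injective i s.injective p true
  have hne : update (fun q => i (s q)) p true ≠ fun q => i (s q) := fun h => by
    simpa [hi] using congrFun h p
  ext a
  have h := hX r hr s p i hi a (fun q => i (s q))
  simp only [hpattern, hi, Bool.not_false, PiLp.smul_apply, PiLp.add_apply, tprod,
    smul_eq_mul, if_true, if_neg hne, if_neg hne.symm, add_zero, zero_add] at h
  exact (mul_left_cancel₀ (by simp) h).symm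

theorem F_update_reflected (hX : CondX F) {r : ℕ} (hr : r ≤ N) (s : Fin r ↪ Fin N)
    (i : Bits N) (p : Fin r) (b : Bool) : F r hr s (update i (s p) b) = F r hr s i := by
  have hclear : ∀ x : Bits N, F r hr s x = F r hr s (update x (s p) false) := fun x => by
    cases hx : x (s p)
    · rw [← hx, update_eq_self]
    · conv_lhs => rw [← update_eq_self (s p) x, hx, ← update_idem false true x]
      exact F_update_true hX hr s (update_self _ _ _)
  rw [hclear, update_idem, ← hclear]

theorem F_eq_of_eq_off_range (hX : CondX F) {r : ℕ} (hr : r ≤ N) (s : Fin r ↪ Fin N)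
    {i j : Bits N} (h : ∀ k ∉ Finset.univ.map s, i k = j k) : F r hr s i = F r hr s j := by
  refine eq_of_eq_off_of_update_invariant (g := F r hr s) _ (fun x k hk b => ?_) h
  obtain ⟨p, -, rfl⟩ := Finset.mem_map.mp hk
  exact F_update_reflected hX hr s x p b

theorem E_comp_swap (hZ : CondZ UF E F) (hX : CondX F) (i : Bits N) (k l : Fin N) :
    E (i ∘ Equiv.swap k l) = E i := by
  have hr : 1 ≤ N := k.pos
  -- `m` agrees with `i` off `k` and with `i ∘ swap k l` off `l`
  set m := update i k (i l)
  have hm_i : F 1 hr (singlePos k) m = F 1 hr (singlePos k) i :=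
    F_eq_of_eq_off_range hX hr _ fun q hq => by
      simp [m, update_of_ne (mt (mem_map_singlePos k q).2 hq)]
  have hm_swap : F 1 hr (singlePos l) m = F 1 hr (singlePos l) (i ∘ Equiv.swap k l) :=
    F_eq_of_eq_off_range hX hr _ fun q hq => by
      have hql : q ≠ l := mt (mem_map_singlePos l q).2 hq
      by_cases hqk : q = k
      · simp [m, hqk]
      · simp [m, hqk, Equiv.swap_apply_of_ne_of_ne hqk hql]
  have hm : F 1 hr (singlePos k) m = F 1 hr (singlePos l) m :=
    (F_eq_iff_E_eq hZ hr (funext fun _ => by simp [m, singlePos, update_apply])).2 rfl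
  suffices F 1 hr (singlePos k) i = F 1 hr (singlePos l) (i ∘ Equiv.swap k l) from
    ((F_eq_iff_E_eq hZ hr (funext fun _ => by simp [singlePos])).1 this).symm
  rw [← hm_i, hm, hm_swap]

theorem E_comp_perm (hZ : CondZ UF E F) (hX : CondX F) (i : Bits N) (σ : Equiv.Perm (Fin N)) :
    E (i ∘ σ) = E i := by
  induction σ using Equiv.Perm.swap_induction_on' with
  | one => rfl
  | mul_swap σ k l _ ih =>
    rw [Equiv.Perm.coe_mul, ← comp_assoc, E_comp_swap hZ hX, ih]

theorem E_eq_of_wt_eq (hZ : CondZ UF E F) (hX : CondX F) {i j : Bits N} (h : wt i = wt j) :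
    E i = E j := by
  obtain ⟨σ, rfl⟩ := exists_perm_comp_eq_of_wt_eq h
  exact E_comp_perm hZ hX j σ

end Attack

def clearReflected {N r : ℕ} (s : Fin r ↪ Fin N) (i : Bits N) : Bits N :=
  fun k => if k ∈ Finset.univ.map s then false else i k

theorem wt_clearReflected {N r : ℕ} (s : Fin r ↪ Fin N) (i : Bits N) :
    wt (clearReflected s i) = wtKept s i := by
  unfold wt wtKept clearReflected
  congr 1
  ext k
  simp

theorem protocol1_F_depends_only_on_kept_weight_general (N d : ℕ)
    (UF : (r : ℕ) → r ≤ N → (HF d r ≃ₗᵢ[ℂ] HF d r))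
    (E : Bits N → EuclideanSpace ℂ (Fin d))
    (F : (r : ℕ) → r ≤ N → (Fin r ↪ Fin N) → Bits N → EuclideanSpace ℂ (Fin d))
    (hZ : CondZ UF E F) (hX : CondX F) :
    ∀ (r : ℕ) (hr : r ≤ N) (s s' : Fin r ↪ Fin N) (i i' : Bits N),
      wtKept s i = wtKept s' i' →
      F r hr s i = F r hr s' i' := by
  intro r hr s s' i i' hw
  have hcleared : ∀ (t : Fin r ↪ Fin N) (j : Bits N),
      F r hr t j = F r hr t (clearReflected t j) := fun t j =>
    F_eq_of_eq_off_range hX hr t fun k hk => by simp [clearReflected, hk]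
  rw [hcleared s, hcleared s']
  refine (F_eq_iff_E_eq hZ hr (funext fun p => by simp [clearReflected])).2 ?_
  exact E_eq_of_wt_eq hZ hX (by rw [wt_clearReflected, wt_clearReflected, hw])

/-- **Proposition 3 of the paper.** If `N ≥ 2` and the attack
induces no error on TEST and CTRL bits, then for two injections `s`, `s'` of
the same length `r` and bitstrings `i`, `i'` with `wt(i∘s̄) = wt(i'∘s̄')`, one
has `F_{s,i} = F_{s',i'}`: Eve's final state depends only on `r` and on the
Hamming weight of the string measured by Bob. -/
theorem protocol1_F_depends_only_on_kept_weight (N d : ℕ) (hN : 2 ≤ N) (hd : 0 < d)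
    (UE : HE N d ≃ₗᵢ[ℂ] HE N d)
    (UF : (r : ℕ) → r ≤ N → (HF d r ≃ₗᵢ[ℂ] HF d r))
    (E : Bits N → EuclideanSpace ℂ (Fin d))
    (F : (r : ℕ) → r ≤ N → (Fin r ↪ Fin N) → Bits N → EuclideanSpace ℂ (Fin d))
    (hT : CondT hd UE E) (hZ : CondZ UF E F) (hX : CondX F) :
    ∀ (r : ℕ) (hr : r ≤ N) (s s' : Fin r ↪ Fin N) (i i' : Bits N),
      wtKept s i = wtKept s' i' →
      F r hr s i = F r hr s' i' :=
  protocol1_F_depends_only_on_kept_weight_general N d UF E F hZ hX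

end SQKD1
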